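/- Graph substitution preserves free links: if fn(G) = {X⃗} (the X⃗ pairwise distinct) then for every template T, fn(T[G / x[X⃗]]) = fn(T). -/
import Mathlib


/-- λ_GT graph templates: `0`, atoms `p(X⃗)`, fusions `X ⋈ Y`,
molecules `(T,T)`, hyperlink creation `νX.T`, graph variables `x[X⃗]`.
Links are natural numbers; atom names are abstract labels. -/
inductive GT where
  | zero : GT
  | atom : String → List ℕ → GT
  | fuse : ℕ → ℕ → GT
  | mol : GT → GT → GT
  | nu : ℕ → GT → GT
  | gvar : String → List ℕ → GT

namespace GT

/-- Free links of a template. -/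
def fn : GT → Finset ℕ
  | zero => ∅
  | atom _ ls => ls.toFinset
  | fuse x y => {x, y}
  | mol t₁ t₂ => fn t₁ ∪ fn t₂
  | nu x t => (fn t).erase x
  | gvar _ ls => ls.toFinset

/-- A link fresh with respect to a finite set. -/
def fresh (s : Finset ℕ) : ℕ := s.sup id + 1

/-- Capture-avoiding simultaneous renaming of free links. -/
def ren (σ : ℕ → ℕ) : GT → GT
  | zero => zero
  | atom p ls => atom p (ls.map σ)
  | fuse x y => fuse (σ x) (σ y)
  | mol t₁ t₂ => mol (ren σ t₁) (ren σ t₂)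
  | gvar x ls => gvar x (ls.map σ)
  | nu x t =>
      let w := fresh (((fn t).erase x).image σ)
      nu w (ren (Function.update σ x w) t)

/-- Capture-avoiding link substitution `T⟨y/x⟩`, replacing free occurrences
of `x` by `y`. -/
def lsubst (t : GT) (y x : ℕ) : GT := ren (Function.update id x y) t

/-- Structural congruence on λ_GT graph templates: the least equivalence
relation closed under rules (E1)–(E10). -/
inductive Cong : GT → GT → Prop where
  | refl (t : GT) : Cong t t
  | symm {t₁ t₂ : GT} : Cong t₁ t₂ → Cong t₂ t₁
  | trans {t₁ t₂ t₃ : GT} : Cong t₁ t₂ → Cong t₂ t₃ → Cong t₁ t₃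
  | e1 (t : GT) : Cong (mol zero t) t
  | e2 (t₁ t₂ : GT) : Cong (mol t₁ t₂) (mol t₂ t₁)
  | e3 (t₁ t₂ t₃ : GT) : Cong (mol t₁ (mol t₂ t₃)) (mol (mol t₁ t₂) t₃)
  | e4 {t₁ t₂ : GT} (t₃ : GT) : Cong t₁ t₂ → Cong (mol t₁ t₃) (mol t₂ t₃)
  | e5 {t₁ t₂ : GT} (x : ℕ) : Cong t₁ t₂ → Cong (nu x t₁) (nu x t₂)
  | e6 {x y : ℕ} {t : GT} : x ∈ fn t ∨ y ∈ fn t →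
      Cong (nu x (mol (fuse x y) t)) (nu x (lsubst t y x))
  | e7 (x y : ℕ) : Cong (nu x (nu y (fuse x y))) zero
  | e8 (x : ℕ) : Cong (nu x zero) zero
  | e9 (x y : ℕ) (t : GT) : Cong (nu x (nu y t)) (nu y (nu x t))
  | e10 {x : ℕ} {t₂ : GT} (t₁ : GT) : x ∉ fn t₂ →
      Cong (nu x (mol t₁ t₂)) (mol (nu x t₁) t₂)

/-- The finite renaming `⟨ls/Xs⟩` sending each `Xsᵢ` to `lsᵢ`. -/
def mkRen (Xs ls : List ℕ) : ℕ → ℕ := fun w =>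
  match (Xs.zip ls).find? (fun p => p.1 = w) with
  | some p => p.2
  | none => w

/-- Graph substitution `T[G / x[Xs]]`: every occurrence of the graph variable
`x` (with the same arity) is replaced by `G` with its free links `Xs` renamed
to the links of the occurrence. -/
def gsubst (x : String) (Xs : List ℕ) (G : GT) : GT → GT
  | zero => zero
  | atom p ls => atom p ls
  | fuse a b => fuse a b
  | mol t₁ t₂ => mol (gsubst x Xs G t₁) (gsubst x Xs G t₂)
  | nu z t => nu z (gsubst x Xs G t)
  | gvar y ls =>
      if y = x ∧ ls.length = Xs.length then ren (mkRen Xs ls) G else gvar y ls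

lemma toFinset_map' (f : ℕ → ℕ) (l : List ℕ) :
    (l.map f).toFinset = l.toFinset.image f := by
  ext a; simp

lemma fresh_not_mem (s : Finset ℕ) : fresh s ∉ s := by
  intro h
  have := Finset.le_sup (f := id) h
  simp only [id] at this
  simp only [fresh] at *
  omega

lemma fn_ren (t : GT) : ∀ σ : ℕ → ℕ, (ren σ t).fn = t.fn.image σ := by
  induction t with
  | zero => intro σ; simp [ren, fn]
  | atom p ls => intro σ; simp [ren, fn, toFinset_map']
  | fuse a b => intro σ; simp [ren, fn, Finset.image_insert]
  | mol t₁ t₂ ih₁ ih₂ =>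
      intro σ; simp [ren, fn, ih₁, ih₂, Finset.image_union]
  | gvar y ls => intro σ; simp [ren, fn, toFinset_map']
  | nu z t ih =>
      intro σ
      simp only [ren, fn, ih]
      set w := fresh (((fn t).erase z).image σ) with hw
      have hwfresh : w ∉ ((fn t).erase z).image σ := fresh_not_mem _
      ext a
      simp only [Finset.mem_erase, Finset.mem_image]
      constructor
      · rintro ⟨haw, b, hb, hba⟩
        by_cases hbz : b = z
        · exfalso; apply haw
          rw [← hba, hbz, Function.update_self]
        · exact ⟨b, ⟨hbz, hb⟩, by rw [← hba, Function.update_of_ne hbz]⟩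
      · rintro ⟨b, ⟨hbz, hb⟩, hba⟩
        refine ⟨?_, b, hb, by rw [Function.update_of_ne hbz, hba]⟩
        intro haw
        exact hwfresh (Finset.mem_image.mpr ⟨b, Finset.mem_erase.mpr ⟨hbz, hb⟩, by rw [hba, haw]⟩)

lemma map_mkRen : ∀ (Xs ls : List ℕ), Xs.Nodup → Xs.length = ls.length →
    Xs.map (mkRen Xs ls) = ls := by
  intro Xs
  induction Xs with
  | nil => intro ls _ h; simpa using (List.length_eq_zero_iff.mp h.symm).symm
  | cons X Xs' ih =>
      intro ls hnd hlen
      cases ls with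
      | nil => simp at hlen
      | cons l ls' =>
        have hnotin : X ∉ Xs' := (List.nodup_cons.mp hnd).1
        have hnd' : Xs'.Nodup := (List.nodup_cons.mp hnd).2
        have hlen' : Xs'.length = ls'.length := by simpa using hlen
        simp only [List.map_cons, List.cons.injEq]
        constructor
        · simp [mkRen, List.zip, List.find?]
        · rw [List.map_congr_left (g := mkRen Xs' ls') ?_]
          · exact ih ls' hnd' hlen'
          · intro a ha
            have hax : ¬ (X = a) := fun h => hnotin (h ▸ ha)
            simp [mkRen, List.zip, List.find?, hax]

end GT

/-- Graph substitution preserves free links: if `fn(G) = {X⃗}` (with the `X⃗`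
pairwise distinct) then for every template `T`,
`fn(T[G / x[X⃗]]) = fn(T)`. -/
theorem gsubst_fn_eq (x : String) (Xs : List ℕ) (G : GT)
    (hnd : Xs.Nodup) (hfn : G.fn = Xs.toFinset) (T : GT) :
    (GT.gsubst x Xs G T).fn = T.fn := by
  induction T with
  | zero => rfl
  | atom p ls => rfl
  | fuse a b => rfl
  | mol t₁ t₂ ih₁ ih₂ => simp [GT.gsubst, GT.fn, ih₁, ih₂]
  | nu z t ih => simp [GT.gsubst, GT.fn, ih]
  | gvar y ls =>
      by_cases h : y = x ∧ ls.length = Xs.length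
      · simp only [GT.gsubst, if_pos h, GT.fn, GT.fn_ren, hfn,
          ← GT.toFinset_map']
        rw [GT.map_mkRen Xs ls hnd h.2.symm]
      · simp [GT.gsubst, if_neg h]
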